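/- For all integers k ≥ 0 and 0 ≤ r ≤ s ≤ k, the identity of formal power series (Σ_{n≥0} C_n^{(k)}(r→s) x^n) · Û_{k+1}(x) = x^{s−r} · Û_r(x) · Û_{k−s}(x) holds in ℚ⟦x⟧; and for all integers 0 ≤ s ≤ r ≤ k one has (Σ_{n≥0} C_n^{(k)}(r→s) x^n) · Û_{k+1}(x) = x^{r−s} · Û_s(x) · Û_{k−r}(x). (Equivalently, Σ_{n≥0} C_n^{(k)}(r→s) x^n = U_r(1/(2x)) U_{k−s}(1/(2x)) / (x U_{k+1}(1/(2x))) for r ≤ s, and the same expression with r and s interchanged for r ≥ s.) -/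

import Mathlib

/-- Number of bounded up-down paths from `(0,r)` to `(n,s)` staying weakly
between the lines `y = 0` and `y = k`. -/
noncomputable def pathCount (k n r s : ℕ) : ℕ :=
  Nat.card {h : Fin (n + 1) → ℤ //
    h 0 = r ∧ h (Fin.last n) = s ∧
    (∀ i, 0 ≤ h i ∧ h i ≤ k) ∧
    (∀ i : Fin n, |h i.succ - h i.castSucc| = 1)}

/-- `Uhat m = Σ_{j≥0} (−1)^j binom(m−j, j) x^{2j}`, i.e. `x^m U_m(1/(2x))`
where `U_m` is the `m`-th Chebyshev polynomial of the second kind. -/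
noncomputable def Uhat (m : ℕ) : PowerSeries ℚ :=
  ∑ j ∈ Finset.range (m + 1),
    PowerSeries.C ((-1 : ℚ) ^ j * ((m - j).choose j : ℚ)) * PowerSeries.X ^ (2 * j)

/-!
Fix the final height `s`. Splitting off the first step shows that the generating functions
`F_a` of bounded paths from height `a` satisfy `F_a = [a = s] + x (F_{a-1} + F_{a+1})` for
`0 ≤ a ≤ k`, with `F_{-1} = F_{k+1} = 0`; this system determines a family of power series
uniquely, coefficient by coefficient. The closed forms multiplied out by `Û_{k+1}` satisfy the
same system thanks to the recurrence `Û_{m+2} = Û_{m+1} - x² Û_m` and the addition formula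
`Û_{a+c} = Û_a Û_c - x² Û_{a-1} Û_{c-1}`. Shifting heights by one, the walls `-1` and `k + 1`
become `0` and `k + 2`, where the convention `Û_{-1} = 0` makes the closed forms vanish.
-/

open PowerSeries

def IsBoundedPath (k n : ℕ) (a b : ℤ) (h : Fin (n + 1) → ℤ) : Prop :=
  h 0 = a ∧ h (Fin.last n) = b ∧ (∀ i, 0 ≤ h i ∧ h i ≤ k) ∧
    ∀ i : Fin n, |h i.succ - h i.castSucc| = 1

noncomputable def boundedPathCount (k n : ℕ) (a b : ℤ) : ℕ :=
  Nat.card {h // IsBoundedPath k n a b h}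

section BoundedPath

variable {k n : ℕ} {a b : ℤ}

theorem pathCount_eq_boundedPathCount (k n r s : ℕ) :
    pathCount k n r s = boundedPathCount k n r s := rfl

instance (k n : ℕ) (a b : ℤ) : Finite {h // IsBoundedPath k n a b h} :=
  Finite.of_injective (fun h i => (⟨h.1 i, h.2.2.2.1 i⟩ : Set.Icc (0 : ℤ) k))
    fun _ _ hgh => Subtype.ext <| funext fun i => congrArg Subtype.val (congrFun hgh i)

theorem boundedPathCount_eq_zero (ha : a < 0 ∨ k < a) : boundedPathCount k n a b = 0 := by
  refine Nat.card_eq_zero.2 (.inl ⟨fun ⟨h, h0, _, hbd, _⟩ => ?_⟩)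
  have := hbd 0
  omega

theorem boundedPathCount_zero (ha₀ : 0 ≤ a) (hak : a ≤ k) :
    boundedPathCount k 0 a b = if a = b then 1 else 0 := by
  split_ifs with hab
  · subst hab
    refine Nat.card_eq_one_iff_unique.2 ⟨⟨fun ⟨g, hg0, _⟩ ⟨h, hh0, _⟩ => ?_⟩,
      ⟨⟨fun _ => a, rfl, rfl, fun _ => ⟨ha₀, hak⟩, Fin.elim0⟩⟩⟩
    exact Subtype.ext <| funext fun i => by rw [Fin.fin_one_eq_zero i]; exact hg0.trans hh0.symm
  · exact Nat.card_eq_zero.2 (.inl ⟨fun ⟨h, h0, hlast, _⟩ => hab (h0 ▸ hlast)⟩)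

theorem isBoundedPath_cons_iff (ha₀ : 0 ≤ a) (hak : a ≤ k) (t : Fin (n + 1) → ℤ) :
    IsBoundedPath k (n + 1) a b (Fin.cons a t) ↔
      |t 0 - a| = 1 ∧ IsBoundedPath k n (t 0) b t := by
  simp only [IsBoundedPath, Fin.cons_zero, Fin.forall_fin_succ, Fin.cons_succ,
    Fin.castSucc_zero, ← Fin.succ_castSucc, ← Fin.succ_last]
  tauto

theorem boundedPathCount_succ (ha₀ : 0 ≤ a) (hak : a ≤ k) :
    boundedPathCount k (n + 1) a b =
      boundedPathCount k n (a - 1) b + boundedPathCount k n (a + 1) b := by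
  classical
  have cons_tail (h : Fin (n + 2) → ℤ) (hh : IsBoundedPath k (n + 1) a b h) :
      Fin.cons a (Fin.tail h) = h := by
    rw [← hh.1, Fin.cons_self_tail]
  have tailEquiv : {h // IsBoundedPath k (n + 1) a b h} ≃
      {t // |t 0 - a| = 1 ∧ IsBoundedPath k n (t 0) b t} :=
    { toFun := fun h => ⟨Fin.tail h.1, by
        rw [← isBoundedPath_cons_iff ha₀ hak, cons_tail _ h.2]; exact h.2⟩
      invFun := fun t => ⟨Fin.cons a t.1, (isBoundedPath_cons_iff ha₀ hak _).2 t.2⟩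
      left_inv := fun h => Subtype.ext (cons_tail _ h.2)
      right_inv := fun t => Subtype.ext (Fin.tail_cons (α := fun _ => ℤ) a t.1) }
  have first_step_iff : ∀ t : Fin (n + 1) → ℤ,
      (|t 0 - a| = 1 ∧ IsBoundedPath k n (t 0) b t) ↔
      (IsBoundedPath k n (a - 1) b t ∨ IsBoundedPath k n (a + 1) b t) := fun t => by
    constructor
    · rintro ⟨hstep, ht⟩
      rcases abs_eq zero_le_one |>.1 hstep with h | h
      · exact .inr (by rwa [show t 0 = a + 1 by omega] at ht)
      · exact .inl (by rwa [show t 0 = a - 1 by omega] at ht)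
    · rintro (ht | ht) <;> rw [ht.1] <;> simp [ht]
  have disj : Disjoint (IsBoundedPath k n (a - 1) b) (IsBoundedPath k n (a + 1) b) :=
    Pi.disjoint_iff.2 fun t => Prop.disjoint_iff.2 fun ⟨h₁, h₂⟩ => by
      have := h₁.1.symm.trans h₂.1
      omega
  rw [boundedPathCount, Nat.card_congr (tailEquiv.trans
    ((Equiv.subtypeEquivRight first_step_iff).trans (subtypeOrEquiv _ _ disj))), Nat.card_sum]
  rfl

end BoundedPath

theorem coeff_Uhat_two_mul (m j : ℕ) :
    coeff (2 * j) (Uhat m) = (-1 : ℚ) ^ j * ((m - j).choose j : ℚ) := by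
  rw [Uhat, map_sum, Finset.sum_eq_single j]
  · rw [coeff_C_mul_X_pow, if_pos rfl]
  · intro i _ hij
    rw [coeff_C_mul_X_pow, if_neg (by omega)]
  · intro hj
    simp [Nat.choose_eq_zero_of_lt (show m - j < j by simp at hj; omega)]

theorem coeff_Uhat_two_mul_add_one (m j : ℕ) : coeff (2 * j + 1) (Uhat m) = 0 := by
  rw [Uhat, map_sum]
  exact Finset.sum_eq_zero fun i _ => by rw [coeff_C_mul_X_pow, if_neg (by omega)]

theorem Uhat_zero : Uhat 0 = 1 := by simp [Uhat]

theorem Uhat_one : Uhat 1 = 1 := by simp [Uhat, Finset.sum_range_succ]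

theorem Nat.add_one_sub_choose_add_one (m i : ℕ) :
    (m + 1 - i).choose (i + 1) = (m - i).choose (i + 1) + (m - i).choose i := by
  rcases le_or_gt i m with h | h
  · rw [show m + 1 - i = m - i + 1 by omega, Nat.choose_succ_succ', add_comm]
  · rw [show m + 1 - i = 0 by omega, show m - i = 0 by omega, Nat.choose_eq_zero_of_lt (by omega),
      Nat.choose_eq_zero_of_lt (by omega : 0 < i)]

theorem Uhat_add_two (m : ℕ) : Uhat (m + 2) = Uhat (m + 1) - X ^ 2 * Uhat m := by
  ext n
  rw [map_sub, coeff_X_pow_mul']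
  obtain ⟨j, rfl | rfl⟩ := Nat.even_or_odd' n
  · rw [coeff_Uhat_two_mul, coeff_Uhat_two_mul]
    cases j with
    | zero => simp
    | succ i =>
      rw [if_pos (by omega), show 2 * (i + 1) - 2 = 2 * i by omega, coeff_Uhat_two_mul,
        show m + 2 - (i + 1) = m + 1 - i by omega, show m + 1 - (i + 1) = m - i by omega,
        Nat.add_one_sub_choose_add_one]
      push_cast
      ring
  · rw [coeff_Uhat_two_mul_add_one, coeff_Uhat_two_mul_add_one]
    split_ifs with h
    · rw [show 2 * j + 1 - 2 = 2 * (j - 1) + 1 by omega, coeff_Uhat_two_mul_add_one, sub_zero]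
    · rw [sub_zero]

noncomputable def UhatPred : ℕ → ℚ⟦X⟧
  | 0 => 0
  | m + 1 => Uhat m

theorem UhatPred_succ (m : ℕ) : UhatPred (m + 1) = Uhat m := rfl

theorem UhatPred_add_two (m : ℕ) : UhatPred (m + 2) = UhatPred (m + 1) - X ^ 2 * UhatPred m := by
  cases m with
  | zero => simp [UhatPred, Uhat_zero, Uhat_one]
  | succ m => exact Uhat_add_two m

theorem UhatPred_add (a c : ℕ) :
    UhatPred (a + c + 1) =
      UhatPred (a + 1) * UhatPred (c + 1) - X ^ 2 * UhatPred a * UhatPred c := by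
  induction a using Nat.twoStepInduction with
  | zero => simp [UhatPred, Uhat_zero]
  | one =>
    rw [add_comm 1 c, UhatPred_add_two]
    simp [UhatPred, Uhat_zero, Uhat_one]
  | more a ih₀ ih₁ =>
    rw [show a + 2 + c + 1 = a + c + 1 + 2 by ring, UhatPred_add_two,
      show a + c + 1 + 1 = a + 1 + c + 1 by ring, ih₀, ih₁, UhatPred_add_two (a + 1),
      UhatPred_add_two a]
    ring

/-- The closed form in shifted heights: start `a = r + 1`, end `t = s + 1`, walls `0` and
`K = k + 2`. -/
noncomputable def pathGFFormula (K t a : ℕ) : ℚ⟦X⟧ :=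
  if a ≤ t then X ^ (t - a) * UhatPred a * UhatPred (K - t)
  else X ^ (a - t) * UhatPred t * UhatPred (K - a)

section pathGFFormula

variable {K t a d e : ℕ}

theorem pathGFFormula_of_add_eq (h : a + d = t) :
    pathGFFormula K t a = X ^ d * UhatPred a * UhatPred (K - t) := by
  rw [pathGFFormula, if_pos (by omega), show t - a = d by omega]

theorem pathGFFormula_of_eq_add (h₁ : t + d = a) (h₂ : a + e = K) :
    pathGFFormula K t a = X ^ d * UhatPred t * UhatPred e := by
  rcases d.eq_zero_or_pos with rfl | hd
  · obtain rfl : t = a := h₁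
    rw [pathGFFormula_of_add_eq (add_zero t), show K - t = e by omega]
  · rw [pathGFFormula, if_neg (by omega), show a - t = d by omega, show K - a = e by omega]

theorem pathGFFormula_zero : pathGFFormula K t 0 = 0 := by
  simp [pathGFFormula_of_add_eq (zero_add t), UhatPred]

theorem pathGFFormula_self : pathGFFormula K t K = 0 := by
  rcases le_total K t with h | h
  · simp [pathGFFormula_of_add_eq (Nat.add_sub_of_le h), Nat.sub_eq_zero_of_le h, UhatPred]
  · simp [pathGFFormula_of_eq_add (Nat.add_sub_of_le h) (add_zero K), UhatPred]

theorem pathGFFormula_eq (ha : 0 < a) (haK : a < K) :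
    pathGFFormula K t a = (if a = t then UhatPred K else 0) +
      X * (pathGFFormula K t (a - 1) + pathGFFormula K t (a + 1)) := by
  obtain ⟨a, rfl⟩ : ∃ a', a = a' + 1 := ⟨a - 1, by omega⟩
  obtain ⟨c, hc⟩ : ∃ c, a + 1 + c + 1 = K := ⟨K - a - 2, by omega⟩
  rw [Nat.add_sub_cancel]
  rcases lt_trichotomy (a + 1) t with hat | rfl | hat
  · obtain ⟨d, hd⟩ : ∃ d, a + 1 + d + 1 = t := ⟨t - a - 2, by omega⟩
    rw [if_neg hat.ne, pathGFFormula_of_add_eq (d := d + 1) (by omega),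
      pathGFFormula_of_add_eq (d := d + 2) (by omega), pathGFFormula_of_add_eq (d := d) (by omega),
      UhatPred_add_two]
    ring
  · rw [if_pos rfl, pathGFFormula_of_eq_add (d := 0) (e := c + 1) rfl (by omega),
      pathGFFormula_of_add_eq (d := 1) rfl, show K - (a + 1) = c + 1 by omega,
      pathGFFormula_of_eq_add (d := 1) (e := c) rfl (by omega), ← hc,
      show a + 1 + c + 1 = a + (c + 1) + 1 by ring, UhatPred_add, UhatPred_add_two c]
    ring
  · obtain ⟨d, hd⟩ : ∃ d, t + d + 1 = a + 1 := ⟨a - t, by omega⟩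
    rw [if_neg hat.ne', pathGFFormula_of_eq_add (d := d + 1) (e := c + 1) (by omega) (by omega),
      pathGFFormula_of_eq_add (d := d) (e := c + 2) (by omega) (by omega),
      pathGFFormula_of_eq_add (d := d + 2) (e := c) (by omega) (by omega), UhatPred_add_two]
    ring

end pathGFFormula

theorem eq_zero_of_eq_X_mul_add {R : Type*} [Semiring R] {G : ℕ → R⟦X⟧} {K : ℕ}
    (h₀ : G 0 = 0) (hK : G K = 0)
    (hG : ∀ a, 0 < a → a < K → G a = X * (G (a - 1) + G (a + 1)))
    {a : ℕ} (ha : a ≤ K) : G a = 0 := by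
  ext n
  induction n generalizing a with
  | zero =>
    obtain rfl | rfl | ⟨ha₀, haK⟩ : a = 0 ∨ a = K ∨ 0 < a ∧ a < K := by omega
    · simp [h₀]
    · simp [hK]
    · simp [hG a ha₀ haK]
  | succ n ih =>
    obtain rfl | rfl | ⟨ha₀, haK⟩ : a = 0 ∨ a = K ∨ 0 < a ∧ a < K := by omega
    · simp [h₀]
    · simp [hK]
    · simp [hG a ha₀ haK, coeff_succ_X_mul, ih (a := a - 1) (by omega),
        ih (a := a + 1) (by omega)]

noncomputable def pathGF (k : ℕ) (a b : ℤ) : ℚ⟦X⟧ :=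
  mk fun n => (boundedPathCount k n a b : ℚ)

theorem pathGF_eq_zero {k : ℕ} {a : ℤ} (b : ℤ) (ha : a < 0 ∨ k < a) : pathGF k a b = 0 := by
  ext n
  simp [pathGF, boundedPathCount_eq_zero ha]

theorem pathGF_eq {k : ℕ} {a : ℤ} (b : ℤ) (ha₀ : 0 ≤ a) (hak : a ≤ k) :
    pathGF k a b = (if a = b then 1 else 0) + X * (pathGF k (a - 1) b + pathGF k (a + 1) b) := by
  ext n
  cases n with
  | zero =>
    simp only [pathGF, coeff_mk, map_add, coeff_zero_X_mul, add_zero,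
      boundedPathCount_zero ha₀ hak]
    split_ifs <;> simp
  | succ n => split_ifs <;> simp [pathGF, boundedPathCount_succ ha₀ hak, coeff_one]

theorem pathGF_mul_UhatPred (k b : ℕ) {a : ℕ} (ha : a ≤ k + 2) :
    pathGF k (a - 1) b * UhatPred (k + 2) = pathGFFormula (k + 2) (b + 1) a := by
  refine sub_eq_zero.1 (eq_zero_of_eq_X_mul_add (K := k + 2)
    (G := fun a : ℕ => pathGF k (a - 1) b * UhatPred (k + 2) - pathGFFormula (k + 2) (b + 1) a)
    ?_ ?_ (fun a ha₀ haK => ?_) ha)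
  · rw [pathGF_eq_zero _ (by omega), zero_mul, pathGFFormula_zero, sub_zero]
  · rw [pathGF_eq_zero _ (by omega), zero_mul, pathGFFormula_self, sub_zero]
  · rw [pathGF_eq b (by omega) (by omega), pathGFFormula_eq ha₀ haK, Nat.cast_succ,
      add_sub_cancel_right, sub_add_cancel, show ((a - 1 : ℕ) : ℤ) = a - 1 by omega]
    simp only [show (a : ℤ) - 1 = b ↔ a = b + 1 by omega]
    split_ifs <;> ring

theorem statement0 (k r s : ℕ) (hr : r ≤ k) (hs : s ≤ k) :
    (r ≤ s →
      (PowerSeries.mk fun n => (pathCount k n r s : ℚ)) * Uhat (k + 1)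
        = PowerSeries.X ^ (s - r) * Uhat r * Uhat (k - s)) ∧
    (s ≤ r →
      (PowerSeries.mk fun n => (pathCount k n r s : ℚ)) * Uhat (k + 1)
        = PowerSeries.X ^ (r - s) * Uhat s * Uhat (k - r)) := by
  have h := pathGF_mul_UhatPred k s (a := r + 1) (by omega)
  rw [Nat.cast_succ, add_sub_cancel_right, UhatPred_succ] at h
  simp only [pathCount_eq_boundedPathCount]
  refine ⟨fun hrs => ?_, fun hsr => ?_⟩
  · rwa [pathGFFormula_of_add_eq (d := s - r) (by omega),
      show k + 2 - (s + 1) = k - s + 1 by omega, UhatPred_succ, UhatPred_succ] at h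
  · rwa [pathGFFormula_of_eq_add (d := r - s) (e := k - r + 1) (by omega) (by omega),
      UhatPred_succ, UhatPred_succ] at h
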